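/- Let R_1 and R_2 be R-cross-sections of IS_n and let φ: R_1 → R_2 be a semigroup isomorphism. Then there exists a permutation Θ of N_n such that φ(α) = Θ^{-1} α Θ for every α ∈ R_1; that is, for every α ∈ R_1 and every x ∈ N_n, x ∈ dom(α) if and only if xΘ ∈ dom(φ(α)), and in that case (xα)Θ = (xΘ)φ(α). -/

import Mathlib

/-!
An R-cross-section `T` of `IS n` contains exactly one element with each domain, and since `R`
is a left congruence, `α = β γ` has a solution `γ ∈ T` iff `dom α ⊆ dom β`. An isomorphism
`φ` preserves and reflects this divisibility, so `dom α ↦ dom φ(α)` is an automorphism of the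
lattice of subsets of `Nₙ`; it maps atoms to atoms and is therefore induced by a permutation
`Θ`. Values are then recovered from domains: `xα = y` iff `x ∈ dom(α ε)`, where `ε ∈ T` has
domain `{y}`.
-/

open scoped Classical

/-- `IS n` is the full inverse symmetric semigroup: all partial bijections of `Fin n`;
multiplication is composition of partial maps (maps acting on the right). -/
abbrev IS (n : ℕ) : Type := PEquiv (Fin n) (Fin n)

noncomputable section
namespace ISW

instance {n : ℕ} : Mul (IS n) := ⟨PEquiv.trans⟩
instance {n : ℕ} : One (IS n) := ⟨PEquiv.refl _⟩

/-- The domain of a partial bijection. -/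
def pdom {n : ℕ} (f : IS n) : Set (Fin n) := {x | (f x).isSome}

/-- The range of a partial bijection. -/
def pran {n : ℕ} (f : IS n) : Set (Fin n) := {y | (f.symm y).isSome}

/-- Green's R-relation on a semigroup (with identity): `u R v` iff `uS = vS`. -/
def GreenR {S : Type*} [Mul S] (u v : S) : Prop :=
  {w | ∃ s, w = u * s} = {w | ∃ s, w = v * s}

/-- Green's L-relation on a semigroup (with identity): `u L v` iff `Su = Sv`. -/
def GreenL {S : Type*} [Mul S] (u v : S) : Prop :=
  {w | ∃ s, w = s * u} = {w | ∃ s, w = s * v}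

/-- An R-cross-section: a subsemigroup containing exactly one element of every
Green R-class. -/
def IsRCrossSection {S : Type*} [Mul S] (T : Set S) : Prop :=
  (∀ a ∈ T, ∀ b ∈ T, a * b ∈ T) ∧ ∀ x : S, ∃! t, t ∈ T ∧ GreenR x t

/-- An L-cross-section: a subsemigroup containing exactly one element of every
Green L-class. -/
def IsLCrossSection {S : Type*} [Mul S] (T : Set S) : Prop :=
  (∀ a ∈ T, ∀ b ∈ T, a * b ∈ T) ∧ ∀ x : S, ∃! t, t ∈ T ∧ GreenL x t

/-- `φ` realizes a semigroup isomorphism from `T₁` onto `T₂`. -/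
def IsSemiIso {S₁ S₂ : Type*} [Mul S₁] [Mul S₂] (T₁ : Set S₁) (T₂ : Set S₂)
    (φ : S₁ → S₂) : Prop :=
  Set.BijOn φ T₁ T₂ ∧ ∀ a ∈ T₁, ∀ b ∈ T₁, φ (a * b) = φ a * φ b

/-- The partial wreath product `IS m ≀_p IS n`: pairs `(f, a)` with `a ∈ IS n` and
`f` a partial map from `Fin n` to `IS m` whose domain equals the domain of `a`. -/
structure PW (m n : ℕ) where
  base : IS n
  fib : Fin n → Option (IS m)
  dom_eq : ∀ x, (fib x).isSome ↔ (base x).isSome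

/-- Multiplication of the partial wreath product: `(f,a)·(g,b) = (f g^a, ab)`. -/
instance {m n : ℕ} : Mul (PW m n) where
  mul u v :=
    { base := u.base * v.base
      fib := fun x => Option.map₂ (· * ·) (u.fib x) ((u.base x).bind v.fib)
      dom_eq := by
        intro x
        show _ ↔ (((u.base x).bind v.base)).isSome
        cases h : u.base x with
        | none =>
          have : u.fib x = none := by
            have := (u.dom_eq x)
            simp [h] at this
            simpa using Option.not_isSome_iff_eq_none.mp (by simp [this])
          simp [h, this, Option.map₂]
        | some y =>
          have hf : (u.fib x).isSome := (u.dom_eq x).mpr (by simp [h])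
          obtain ⟨s, hs⟩ := Option.isSome_iff_exists.mp hf
          cases h2 : v.base y with
          | none =>
            have : v.fib y = none := by
              have := (v.dom_eq y)
              simp [h2] at this
              simpa using Option.not_isSome_iff_eq_none.mp (by simp [this])
            simp [h, h2, hs, this, Option.map₂]
          | some z =>
            have hg : (v.fib y).isSome := (v.dom_eq y).mpr (by simp [h2])
            obtain ⟨t, ht⟩ := Option.isSome_iff_exists.mp hg
            simp [h, h2, hs, ht, Option.map₂] }

/-- The identity of the partial wreath product. -/
instance {m n : ℕ} : One (PW m n) where
  one :=
    { base := 1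
      fib := fun _ => some 1
      dom_eq := by intro x; simp; rfl }

/-- `chainFun L j x`: with `L` listing the elements of a block in increasing order and
`0 ≤ j < |L|` (`j` is the 0-based version of the paper's index), this is the value at `x` of
the chain `a_{i,j}`: the partial bijection with domain everything except `L[j]`,
sending `L[l] ↦ L[l+1]` for `l < j` and fixing all other points. -/
def chainFun {n : ℕ} (L : List (Fin n)) (j : ℕ) (x : Fin n) : Option (Fin n) :=
  if x ∈ L then
    if L.idxOf x = j then none
    else if L.idxOf x < j then L[L.idxOf x + 1]?
    else some x
  else some x

/-- The generators `a_{i,j}` attached to an ordered decomposition with blocks `B i`. -/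
def RGens {n s : ℕ} (B : Fin s → List (Fin n)) : Set (IS n) :=
  {a : IS n | ∃ i : Fin s, ∃ j : ℕ, j < (B i).length ∧ ∀ x, a x = chainFun (B i) j x}

/-- `R(M⃗₁, …, M⃗ₛ)`: the subsemigroup of `IS n` generated by the chains `a_{i,j}`
together with the identity map. -/
def RSec {n s : ℕ} (B : Fin s → List (Fin n)) : Set (IS n) :=
  (Subsemigroup.closure (RGens B ∪ {1}) : Subsemigroup (IS n))

/-- A decomposition of `Fin n` into disjoint nonempty blocks, each block equipped with
a linear order, recorded by listing the elements of each block in increasing order. -/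
structure OrderedPartition (n s : ℕ) where
  B : Fin s → List (Fin n)
  nonempty : ∀ i, B i ≠ []
  nodup : ∀ i, (B i).Nodup
  disjoint : ∀ i j, i ≠ j → ∀ x, x ∈ B i → x ∉ B j
  cover : ∀ x, ∃ i, x ∈ B i

/-- The chain `a_{i,j}` of the block listed by `L`, viewed inside `IS(M_i)`, i.e. embedded
into `IS n` as a partial bijection whose domain is contained in the block: it is defined on
`L` minus `L[j]`, sends `L[l] ↦ L[l+1]` for `l < j` and fixes the other points of `L`. -/
def chainFunB {n : ℕ} (L : List (Fin n)) (j : ℕ) (x : Fin n) : Option (Fin n) :=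
  if x ∈ L then
    if L.idxOf x = j then none
    else if L.idxOf x < j then L[L.idxOf x + 1]?
    else some x
  else none

/-- The generators of `R(M⃗)` inside `IS(M)` (embedded in `IS n`), `M` listed by `L`. -/
def BlockGens {n : ℕ} (L : List (Fin n)) : Set (IS n) :=
  {a : IS n | ∃ j : ℕ, j < L.length ∧ ∀ x, a x = chainFunB L j x}

/-- The identity of `IS(M)` (embedded in `IS n`): the identity map of the block listed by `L`. -/
def idOn {n : ℕ} (L : List (Fin n)) : Set (IS n) :=
  {a : IS n | ∀ x, a x = if x ∈ L then some x else none}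

/-- The R-cross-section `R(M⃗)` of `IS(M)`, embedded into `IS n`, for the block listed by `L`. -/
def RSecBlock {n : ℕ} (L : List (Fin n)) : Set (IS n) :=
  (Subsemigroup.closure (BlockGens L ∪ idOn L) : Subsemigroup (IS n))

/-- The wreath product `R_i ≀_p R(M⃗_i)` where `R(M⃗_i) ⊆ IS(M_i)`, `M_i` listed by `L`,
and `R_i = T ⊆ IS m`, realized inside `PW m n` via the natural embedding
`IS m ≀_p IS(M_i) ⊆ IS m ≀_p IS n`. -/
def WBlock (m n : ℕ) (L : List (Fin n)) (T : Set (IS m)) : Set (PW m n) :=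
  {u : PW m n | u.base ∈ RSecBlock L ∧ ∀ x f, u.fib x = some f → f ∈ T}

/-- The element `e' = (0̄, 1)` of `IS m ≀_p IS n`: the second component is the identity of
`IS n` and the first component sends every point to the empty map `0` of `IS m`. -/
def ezero (m n : ℕ) : PW m n where
  base := 1
  fib := fun _ => some ⊥
  dom_eq := by intro x; simp; rfl

theorem exists_equiv_image_eq_of_orderIso {α β : Type*} (e : Set α ≃o Set β) :
    ∃ θ : α ≃ β, ∀ A, θ '' A = e A := by
  choose θ hθ using fun x : α =>
    Set.isAtom_iff.mp ((e.isAtom_iff _).mpr (Set.isAtom_singleton x))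
  choose θ' hθ' using fun y : β =>
    Set.isAtom_iff.mp ((e.symm.isAtom_iff _).mpr (Set.isAtom_singleton y))
  have left_inv : Function.LeftInverse θ' θ := fun x => by
    simpa [← hθ, eq_comm] using hθ' (θ x)
  have right_inv : Function.RightInverse θ' θ := fun y => by
    simpa [← hθ', eq_comm] using hθ (θ' y)
  refine ⟨⟨θ, θ', left_inv, right_inv⟩, fun A => Set.ext fun y => ?_⟩
  calc y ∈ θ '' A ↔ θ' y ∈ A := by
          rw [← right_inv y, Set.mem_image_iff_of_inverse left_inv right_inv, right_inv]
    _ ↔ {θ' y} ≤ A := Set.singleton_subset_iff.symm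
    _ ↔ e {θ' y} ≤ e A := e.le_iff_le.symm
    _ ↔ y ∈ e A := by rw [hθ, ← right_inv y, left_inv, right_inv,
          Set.singleton_subset_iff]

section Semigroup

variable {S : Type*} [Semigroup S]

theorem GreenR.mul_left {u v : S} (h : GreenR u v) (a : S) : GreenR (a * u) (a * v) := by
  have key : ∀ {b c : S}, GreenR b c → ∀ s, ∃ s', a * b * s = a * c * s' :=
    fun {b c} hbc s => by
      obtain ⟨s', hs'⟩ := (Set.ext_iff.mp hbc (b * s)).mp ⟨s, rfl⟩
      exact ⟨s', by rw [mul_assoc, hs', mul_assoc]⟩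
  ext w
  constructor
  · rintro ⟨s, rfl⟩
    exact key h s
  · rintro ⟨s, rfl⟩
    exact key h.symm s

theorem IsRCrossSection.exists_mem_mul_eq_iff {T : Set S} (hT : IsRCrossSection T)
    {α β : S} (hα : α ∈ T) (hβ : β ∈ T) :
    (∃ γ ∈ T, α = β * γ) ↔ ∃ s, α = β * s := by
  refine ⟨fun ⟨γ, _, h⟩ => ⟨γ, h⟩, ?_⟩
  rintro ⟨s, rfl⟩
  -- `γ` represents the `R`-class of `s`; `R` is a left congruence, so `β * γ R β * s`
  obtain ⟨γ, ⟨hγ, hsγ⟩, -⟩ := hT.2 s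
  obtain ⟨t, -, ht⟩ := hT.2 (β * s)
  have h₁ : β * s = t := ht _ ⟨hα, rfl⟩
  have h₂ : β * γ = t := ht _ ⟨hT.1 β hβ γ hγ, hsγ.mul_left β⟩
  exact ⟨γ, hγ, h₁.trans h₂.symm⟩

theorem IsSemiIso.exists_mul_eq_iff {T₁ T₂ : Set S} (h₁ : IsRCrossSection T₁)
    (h₂ : IsRCrossSection T₂) {φ : S → S} (hφ : IsSemiIso T₁ T₂ φ)
    {α β : S} (hα : α ∈ T₁) (hβ : β ∈ T₁) :
    (∃ s, φ α = φ β * s) ↔ ∃ s, α = β * s := by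
  obtain ⟨hbij, hmul⟩ := hφ
  rw [← h₁.exists_mem_mul_eq_iff hα hβ,
    ← h₂.exists_mem_mul_eq_iff (hbij.mapsTo hα) (hbij.mapsTo hβ)]
  constructor
  · rintro ⟨γ', hγ', h⟩
    obtain ⟨γ, hγ, rfl⟩ := hbij.surjOn hγ'
    refine ⟨γ, hγ, hbij.injOn hα (h₁.1 β hβ γ hγ) ?_⟩
    rw [h, hmul β hβ γ hγ]
  · rintro ⟨γ, hγ, rfl⟩
    exact ⟨φ γ, hbij.mapsTo hγ, hmul β hβ γ hγ⟩

end Semigroup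

section PartialBijection

variable {n : ℕ}

instance : Semigroup (IS n) where
  mul := (· * ·)
  mul_assoc := PEquiv.trans_assoc

theorem mul_apply (a b : IS n) (x : Fin n) : (a * b) x = (a x).bind b := rfl

theorem mem_pdom_mul {a b : IS n} {x : Fin n} :
    x ∈ pdom (a * b) ↔ ∃ y, a x = some y ∧ y ∈ pdom b := by
  simp only [pdom, Set.mem_ofPred_eq, mul_apply]
  cases a x <;> simp

theorem pdom_mul_subset (a b : IS n) : pdom (a * b) ⊆ pdom a := fun _ hx => by
  obtain ⟨y, hy, -⟩ := mem_pdom_mul.mp hx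
  simp [pdom, hy]

theorem apply_eq_some_iff_mem_pdom_mul {a c : IS n} {y : Fin n} (hc : pdom c = {y})
    (x : Fin n) : a x = some y ↔ x ∈ pdom (a * c) := by
  simp [mem_pdom_mul, hc]

theorem ofSet_mul_of_pdom_subset {a : IS n} {s : Set (Fin n)} [DecidablePred (· ∈ s)]
    (h : pdom a ⊆ s) : PEquiv.ofSet s * a = a := by
  ext x y
  rw [mul_apply]
  by_cases hx : x ∈ s
  · simp [PEquiv.ofSet, hx]
  · simp [PEquiv.ofSet, hx, Option.not_isSome_iff_eq_none.mp fun h' => hx (h h')]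

theorem exists_mul_eq_iff_pdom_subset {a b : IS n} :
    (∃ s, a = b * s) ↔ pdom a ⊆ pdom b := by
  refine ⟨fun ⟨s, hs⟩ => hs ▸ pdom_mul_subset b s, fun h => ⟨b.symm * a, ?_⟩⟩
  rw [← mul_assoc, show b * b.symm = _ from PEquiv.self_trans_symm b]
  exact (ofSet_mul_of_pdom_subset (s := {x | (b x).isSome}) h).symm

theorem greenR_iff_pdom_eq {a b : IS n} : GreenR a b ↔ pdom a = pdom b := by
  have hideal : ∀ c : IS n, {w | ∃ s, w = c * s} = {w | pdom w ⊆ pdom c} := fun c =>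
    Set.ext fun w => exists_mul_eq_iff_pdom_subset
  rw [GreenR, hideal, hideal]
  refine ⟨fun h => ?_, fun h => by rw [h]⟩
  exact ((Set.ext_iff.mp h a).mp (Set.Subset.refl _)).antisymm
    ((Set.ext_iff.mp h b).mpr (Set.Subset.refl _))

theorem pdom_ofSet (A : Set (Fin n)) : pdom (PEquiv.ofSet A) = A := by
  ext x
  by_cases hx : x ∈ A <;> simp [pdom, PEquiv.ofSet, hx]

theorem IsRCrossSection.existsUnique_pdom_eq {T : Set (IS n)} (h : IsRCrossSection T)
    (A : Set (Fin n)) : ∃! t, t ∈ T ∧ pdom t = A := by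
  simpa only [greenR_iff_pdom_eq, pdom_ofSet, eq_comm] using h.2 (PEquiv.ofSet A)

theorem IsRCrossSection.pdom_injOn {T : Set (IS n)} (h : IsRCrossSection T) :
    Set.InjOn pdom T := fun _ ha _ hb hab =>
  (h.existsUnique_pdom_eq _).unique ⟨ha, rfl⟩ ⟨hb, hab.symm⟩

theorem IsSemiIso.exists_orderIso_pdom {T₁ T₂ : Set (IS n)} (h₁ : IsRCrossSection T₁)
    (h₂ : IsRCrossSection T₂) {φ : IS n → IS n} (hφ : IsSemiIso T₁ T₂ φ) :
    ∃ e : Set (Fin n) ≃o Set (Fin n), ∀ α ∈ T₁, e (pdom α) = pdom (φ α) := by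
  choose rep hrep using fun A => (h₁.existsUnique_pdom_eq A).exists
  have hle : ∀ α ∈ T₁, ∀ β ∈ T₁, pdom (φ α) ⊆ pdom (φ β) ↔ pdom α ⊆ pdom β := by
    intro α hα β hβ
    rw [← exists_mul_eq_iff_pdom_subset, ← exists_mul_eq_iff_pdom_subset,
      hφ.exists_mul_eq_iff h₁ h₂ hα hβ]
  have hsurj : ∀ B, ∃ A, pdom (φ (rep A)) = B := fun B => by
    obtain ⟨t, ⟨ht, rfl⟩, -⟩ := h₂.existsUnique_pdom_eq B
    obtain ⟨α, hα, rfl⟩ := hφ.1.surjOn ht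
    exact ⟨pdom α, by rw [h₁.pdom_injOn (hrep _).1 hα (hrep _).2]⟩
  refine ⟨OrderIso.ofSurjective (OrderEmbedding.ofMapLEIff (fun A => pdom (φ (rep A)))
    fun A B => ?_) hsurj, fun α hα => ?_⟩
  · simpa only [(hrep _).2] using hle _ (hrep A).1 _ (hrep B).1
  · show pdom (φ (rep (pdom α))) = _
    rw [h₁.pdom_injOn (hrep _).1 hα (hrep _).2]

end PartialBijection

/-- every isomorphism of R-cross-sections of `IS n` is a conjugacy:
there is a permutation `Θ` with `φ(α) = Θ⁻¹ α Θ` for all `α`, i.e.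
`x ∈ dom α ↔ x Θ ∈ dom φ(α)` and `(x α) Θ = (x Θ) φ(α)`. -/
theorem iso_rcross_is_conjugacy (n : ℕ) (T₁ T₂ : Set (IS n))
    (h₁ : IsRCrossSection T₁) (h₂ : IsRCrossSection T₂)
    (φ : IS n → IS n) (hφ : IsSemiIso T₁ T₂ φ) :
    ∃ Θ : Equiv.Perm (Fin n),
      ∀ α ∈ T₁, ∀ x : Fin n,
        ((α x).isSome ↔ ((φ α) (Θ x)).isSome) ∧
        (∀ y, α x = some y → (φ α) (Θ x) = some (Θ y)) := by
  obtain ⟨e, he⟩ := hφ.exists_orderIso_pdom h₁ h₂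
  obtain ⟨Θ, hΘ⟩ := exists_equiv_image_eq_of_orderIso e
  have hdom : ∀ α ∈ T₁, ∀ x, x ∈ pdom α ↔ Θ x ∈ pdom (φ α) := fun α hα x => by
    rw [← he α hα, ← hΘ, Θ.injective.mem_set_image]
  refine ⟨Θ, fun α hα x => ⟨hdom α hα x, fun y hy => ?_⟩⟩
  obtain ⟨β, ⟨hβ, hβdom⟩, -⟩ := h₁.existsUnique_pdom_eq {y}
  have hφβ : pdom (φ β) = {Θ y} := by
    rw [← he β hβ, ← hΘ, hβdom, Set.image_singleton]
  rw [apply_eq_some_iff_mem_pdom_mul hφβ, ← hφ.2 α hα β hβ, ← hdom _ (h₁.1 α hα β hβ),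
    ← apply_eq_some_iff_mem_pdom_mul hβdom]
  exact hy

end ISW
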